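/- arXiv:1401.3073 — 2 statements merged into one kernel-verified Lean document; each statement's English description precedes it below -/
import Mathlib

section
/- Fix k ≥ 0. Let δ_i = (f − s_i^t f)/α_i be the left divided difference operator on R_∞, where α_0 = 2t_1 and α_i = t_{i+1} − t_i for i ≥ 1. Then δ_i(ϑ_r^{(l)}) = 0 if l ≠ ±i, and δ_i(ϑ_r^{(±i)}) = ϑ_{r-1}^{(±i−1)} (i.e., δ_i(ϑ_r^{(i)}) = ϑ_{r-1}^{(i-1)} for i ≥ 0 and δ_i(ϑ_r^{(-i)}) = ϑ_{r-1}^{(-i-1)} for i > 0). -/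
/-!
Statement 4: Fix `k ≥ 0`.  Let `δ_i f = (f − s_i^t f)/α_i` be the left divided difference
operator on `R_∞`, where `α_0 = 2t_1` and `α_i = t_{i+1} − t_i` for `i ≥ 1`.  Then
`δ_i(ϑ_r^{(l)}) = 0` if `l ≠ ±i`, and `δ_i(ϑ_r^{(±i)}) = ϑ_{r-1}^{(±i−1)}` (that is,
`δ_i(ϑ_r^{(i)}) = ϑ_{r-1}^{(i-1)}` for `i ≥ 0` and `δ_i(ϑ_r^{(-i)}) = ϑ_{r-1}^{(-i-1)}` for
`i > 0`).

We realize the theta polynomials by their generating functions, universally over every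
commutative ring, every number `N` of (possibly nonzero) `x`-variables and all values of the
variables (0-indexed: `x i, z i, t i` stand for `x_{i+1}, z_{i+1}, t_{i+1}`).  Since `α_i` is a
regular element of the generic polynomial ring, the equation `δ_i f = g` is equivalent to the
multiplied form `f − s_i^t f = α_i · g`, which is how we state it (the case `δ_i f = 0` being
`s_i^t f = f`). -/

open Finset

noncomputable section

variable {R : Type*} [CommRing R]

/-- The power series `(1 - a u)⁻¹ = ∑_n aⁿ uⁿ`. -/
def geomSeries (a : R) : PowerSeries R := PowerSeries.mk fun n => a ^ n

/-- The generating function `f_l(u)` of the double theta polynomials `_kϑ_r^{(l)}`. -/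
def thetaGF (k N : ℕ) (x z t : ℕ → R) (l : ℤ) : PowerSeries R :=
  (∏ i ∈ range N, ((1 + PowerSeries.C (x i) * PowerSeries.X) * geomSeries (x i))) *
    (∏ i ∈ range k, (1 + PowerSeries.C (z i) * PowerSeries.X)) *
    (if 0 ≤ l then ∏ i ∈ range l.toNat, (1 - PowerSeries.C (t i) * PowerSeries.X)
     else ∏ i ∈ range (-l).toNat, geomSeries (-(t i)))

/-- The double theta polynomial `_kϑ_r^{(l)}(x,z|t)`; it vanishes for `r < 0`. -/
def theta (k N : ℕ) (x z t : ℕ → R) (l r : ℤ) : R :=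
  if r < 0 then 0 else PowerSeries.coeff r.toNat (thetaGF k N x z t l)

/-- The image `s_i^t(ϑ_r^{(l)})` of a double theta polynomial under the left Weyl group action:
for `i ≥ 1` the variables `t_i` and `t_{i+1}` are swapped; for `i = 0`, `t_1 ↦ -t_1` and
`Q_r(x) ↦ Q_r(-t_1, x)`. -/
def thetaST (i k N : ℕ) (x z t : ℕ → R) (l r : ℤ) : R :=
  if i = 0 then
    theta k (N + 1) (fun j => if j = 0 then -(t 0) else x (j - 1)) z
      (Function.update t 0 (-(t 0))) l r
  else
    theta k N x z (t ∘ Equiv.swap (i - 1) i) l r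

/-- The simple root `α_i`: `α_0 = 2t_1`, `α_i = t_{i+1} − t_i` for `i ≥ 1`. -/
def alphaRoot (i : ℕ) (t : ℕ → R) : R := if i = 0 then 2 * t 0 else t i - t (i - 1)

/-!
The generating function factors as `F(u) · T_l(u)`, where `F` involves only `x, z` and `T_l` only
`t`: `T_m = ∏_{j<m} (1 - t_j u)` and `T_{-m} = ∏_{j<m} (1 + t_j u)⁻¹`. For `i ≥ 1`, `s_i^t` swaps
two consecutive variables and `T_l` is symmetric in the variables it contains, so only `l = ±i`
move, and there a single factor changes: `(1 - t_i u) - (1 - t_{i+1} u) = α_i u` and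
`(1 + t_i u)⁻¹ - (1 + t_{i+1} u)⁻¹ = α_i u (1 + t_i u)⁻¹ (1 + t_{i+1} u)⁻¹`.
For `i = 0`, `s_0^t` multiplies `F` by `(1 - t_1 u)/(1 + t_1 u)` and flips the sign of `t_1`
in `T_l`, which exactly compensates unless `l = 0`, where
`1 - (1 - t_1 u)/(1 + t_1 u) = 2 t_1 u (1 + t_1 u)⁻¹` produces `T_{-1}`.
Comparing coefficients of `u^r` turns `f - g = a u h` into `f_r - g_r = a h_{r-1}`.
-/

open PowerSeries

theorem geomSeries_mul_one_sub (a : R) : geomSeries a * (1 - C a * X) = 1 := by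
  have h := congrArg (rescale a) (mk_one_mul_one_sub_eq_one R)
  rw [map_mul, map_sub, map_one, rescale_X, rescale_mk] at h
  simpa [geomSeries] using h

theorem geomSeries_neg_mul_one_add (a : R) : geomSeries (-a) * (1 + C a * X) = 1 := by
  simpa [sub_eq_add_neg] using geomSeries_mul_one_sub (-a)

theorem geomSeries_neg_sub_geomSeries_neg (a b : R) :
    geomSeries (-a) - geomSeries (-b) = C (b - a) * X * (geomSeries (-a) * geomSeries (-b)) := by
  rw [map_sub]
  linear_combination geomSeries (-b) * geomSeries_neg_mul_one_add a -
    geomSeries (-a) * geomSeries_neg_mul_one_add b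

def coeffInt (r : ℤ) (f : PowerSeries R) : R := if r < 0 then 0 else coeff r.toNat f

theorem coeffInt_sub_eq_of_sub_eq_C_mul_X_mul {f g h : PowerSeries R} {a : R}
    (H : f - g = C a * X * h) (r : ℤ) :
    coeffInt r f - coeffInt r g = a * coeffInt (r - 1) h := by
  unfold coeffInt
  rcases lt_or_ge r 0 with hr | hr
  · simp [hr, show r - 1 < 0 by omega]
  · lift r to ℕ using hr with n
    rw [if_neg (by omega), if_neg (by omega), Int.toNat_natCast, ← map_sub, H, mul_assoc,
      coeff_C_mul]
    cases n with
    | zero => simp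
    | succ n => simp [coeff_succ_X_mul]

theorem prod_range_comp_swap {M : Type*} [CommMonoid M] (f : ℕ → M) {i m : ℕ}
    (hm : m ≠ i + 1) : ∏ j ∈ range m, f (Equiv.swap i (i + 1) j) = ∏ j ∈ range m, f j := by
  rcases Nat.lt_or_gt_of_ne hm with hm | hm
  · refine prod_congr rfl fun j hj => ?_
    rw [Equiv.swap_apply_of_ne_of_ne (by simp at hj; omega) (by simp at hj; omega)]
  · refine Equiv.Perm.prod_comp _ _ _ fun j hj => ?_
    by_contra hj'
    simp only [mem_coe, mem_range, not_lt] at hj'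
    exact hj (Equiv.swap_apply_of_ne_of_ne (by omega) (by omega))

def xzFactor (k N : ℕ) (x z : ℕ → R) : PowerSeries R :=
  (∏ i ∈ range N, ((1 + C (x i) * X) * geomSeries (x i))) * ∏ i ∈ range k, (1 + C (z i) * X)

def tFactor (t : ℕ → R) (l : ℤ) : PowerSeries R :=
  if 0 ≤ l then ∏ i ∈ range l.toNat, (1 - C (t i) * X)
  else ∏ i ∈ range (-l).toNat, geomSeries (-(t i))

theorem thetaGF_eq_xzFactor_mul_tFactor (k N : ℕ) (x z t : ℕ → R) (l : ℤ) :
    thetaGF k N x z t l = xzFactor k N x z * tFactor t l := rfl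

theorem theta_eq_coeffInt (k N : ℕ) (x z t : ℕ → R) (l r : ℤ) :
    theta k N x z t l r = coeffInt r (thetaGF k N x z t l) := rfl

theorem xzFactor_succ (k N : ℕ) (x z : ℕ → R) (a : R) :
    xzFactor k (N + 1) (fun j => if j = 0 then a else x (j - 1)) z =
      (1 + C a * X) * geomSeries a * xzFactor k N x z := by
  simp only [xzFactor, prod_range_succ', if_pos, Nat.add_one_ne_zero, if_false,
    Nat.add_sub_cancel]
  ring

theorem tFactor_natCast (t : ℕ → R) (m : ℕ) :
    tFactor t m = ∏ j ∈ range m, (1 - C (t j) * X) := by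
  simp [tFactor]

theorem tFactor_neg_natCast (t : ℕ → R) (m : ℕ) :
    tFactor t (-m) = ∏ j ∈ range m, geomSeries (-(t j)) := by
  rcases m.eq_zero_or_pos with rfl | hm
  · simp [tFactor]
  · simp [tFactor, hm.ne']

theorem tFactor_comp_swap_of_ne (t : ℕ → R) {i : ℕ} {l : ℤ} (hl : l ≠ ((i + 1 : ℕ) : ℤ))
    (hl' : l ≠ -((i + 1 : ℕ) : ℤ)) : tFactor (t ∘ Equiv.swap i (i + 1)) l = tFactor t l := by
  rcases Int.eq_nat_or_neg l with ⟨m, rfl | rfl⟩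
  · rw [tFactor_natCast, tFactor_natCast]
    exact prod_range_comp_swap (fun j => 1 - C (t j) * X) (by omega)
  · rw [tFactor_neg_natCast, tFactor_neg_natCast]
    exact prod_range_comp_swap (fun j => geomSeries (-(t j))) (by omega)

theorem tFactor_sub_tFactor_comp_swap (t : ℕ → R) (i : ℕ) :
    tFactor t ((i + 1 : ℕ) : ℤ) - tFactor (t ∘ Equiv.swap i (i + 1)) ((i + 1 : ℕ) : ℤ) =
      C (t (i + 1) - t i) * X * tFactor t (((i + 1 : ℕ) : ℤ) - 1) := by
  rw [Nat.cast_succ, add_sub_cancel_right, ← Nat.cast_succ, tFactor_natCast, tFactor_natCast,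
    tFactor_natCast, prod_range_succ, prod_range_succ]
  simp only [Function.comp_apply, Equiv.swap_apply_left, map_sub]
  rw [prod_range_comp_swap (fun j => 1 - C (t j) * X) i.succ_ne_self.symm]
  ring

theorem tFactor_neg_sub_tFactor_comp_swap (t : ℕ → R) (i : ℕ) :
    tFactor t (-((i + 1 : ℕ) : ℤ)) - tFactor (t ∘ Equiv.swap i (i + 1)) (-((i + 1 : ℕ) : ℤ)) =
      C (t (i + 1) - t i) * X * tFactor t (-((i + 1 : ℕ) : ℤ) - 1) := by
  rw [show -((i + 1 : ℕ) : ℤ) - 1 = -((i + 2 : ℕ) : ℤ) by push_cast; ring, tFactor_neg_natCast,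
    tFactor_neg_natCast, tFactor_neg_natCast, prod_range_succ, prod_range_succ, prod_range_succ,
    prod_range_succ]
  simp only [Function.comp_apply, Equiv.swap_apply_left]
  rw [prod_range_comp_swap (fun j => geomSeries (-(t j))) i.succ_ne_self.symm]
  linear_combination (∏ j ∈ range i, geomSeries (-(t j))) *
    geomSeries_neg_sub_geomSeries_neg (t i) (t (i + 1))

theorem tFactor_update_zero_neg (t : ℕ → R) {l : ℤ} (hl : l ≠ 0) :
    (1 + C (-(t 0)) * X) * geomSeries (-(t 0)) * tFactor (Function.update t 0 (-(t 0))) l =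
      tFactor t l := by
  rcases Int.eq_nat_or_neg l with ⟨m, rfl | rfl⟩ <;>
    obtain ⟨m, rfl⟩ := Nat.exists_eq_add_one_of_ne_zero (n := m) (by rintro rfl; simp at hl)
  · rw [tFactor_natCast, tFactor_natCast, prod_range_succ', prod_range_succ']
    simp only [Function.update_self, Function.update_of_ne (Nat.succ_ne_zero _), map_neg]
    linear_combination (1 - C (t 0) * X) * (∏ j ∈ range m, (1 - C (t (j + 1)) * X)) *
      geomSeries_neg_mul_one_add (t 0)
  · rw [tFactor_neg_natCast, tFactor_neg_natCast, prod_range_succ', prod_range_succ']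
    simp only [Function.update_self, Function.update_of_ne (Nat.succ_ne_zero _), neg_neg,
      map_neg]
    linear_combination geomSeries (-(t 0)) * (∏ j ∈ range m, geomSeries (-(t (j + 1)))) *
      geomSeries_mul_one_sub (t 0)

theorem thetaGF_succ_update_zero_neg (k N : ℕ) (x z t : ℕ → R) {l : ℤ} (hl : l ≠ 0) :
    thetaGF k (N + 1) (fun j => if j = 0 then -(t 0) else x (j - 1)) z
      (Function.update t 0 (-(t 0))) l = thetaGF k N x z t l := by
  rw [thetaGF_eq_xzFactor_mul_tFactor, thetaGF_eq_xzFactor_mul_tFactor, xzFactor_succ,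
    ← tFactor_update_zero_neg t hl]
  ring

theorem thetaGF_zero_sub_thetaGF_succ_update_zero_neg (k N : ℕ) (x z t : ℕ → R) :
    thetaGF k N x z t 0 - thetaGF k (N + 1) (fun j => if j = 0 then -(t 0) else x (j - 1)) z
      (Function.update t 0 (-(t 0))) 0 = C (2 * t 0) * X * thetaGF k N x z t (0 - 1) := by
  have hT_zero (s : ℕ → R) : tFactor s 0 = 1 := by simp [tFactor]
  have hT_neg_one : tFactor t (0 - 1) = geomSeries (-(t 0)) := by simp [tFactor]
  rw [thetaGF_eq_xzFactor_mul_tFactor, thetaGF_eq_xzFactor_mul_tFactor,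
    thetaGF_eq_xzFactor_mul_tFactor, xzFactor_succ, hT_zero, hT_zero, hT_neg_one]
  simp only [map_mul, map_neg, map_ofNat]
  linear_combination -xzFactor k N x z * geomSeries_neg_mul_one_add (t 0)

theorem theta_sub_theta_eq_of_tFactor_sub (k N : ℕ) (x z : ℕ → R) {t t' : ℕ → R} {l l' : ℤ}
    {a : R} (H : tFactor t l - tFactor t' l = C a * X * tFactor t l') (r : ℤ) :
    theta k N x z t l r - theta k N x z t' l r = a * theta k N x z t l' (r - 1) :=
  coeffInt_sub_eq_of_sub_eq_C_mul_X_mul (by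
    rw [thetaGF_eq_xzFactor_mul_tFactor, thetaGF_eq_xzFactor_mul_tFactor,
      thetaGF_eq_xzFactor_mul_tFactor, ← mul_sub, H]
    ring) r

theorem thetaST_zero (k N : ℕ) (x z t : ℕ → R) (l r : ℤ) :
    thetaST 0 k N x z t l r = theta k (N + 1) (fun j => if j = 0 then -(t 0) else x (j - 1)) z
      (Function.update t 0 (-(t 0))) l r := rfl

theorem thetaST_succ (i k N : ℕ) (x z t : ℕ → R) (l r : ℤ) :
    thetaST (i + 1) k N x z t l r = theta k N x z (t ∘ Equiv.swap i (i + 1)) l r := by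
  simp [thetaST]

theorem alphaRoot_zero (t : ℕ → R) : alphaRoot 0 t = 2 * t 0 := rfl

theorem alphaRoot_succ (i : ℕ) (t : ℕ → R) : alphaRoot (i + 1) t = t (i + 1) - t i := by
  simp [alphaRoot]

/-- Lemma 5.5 of Ikeda–Matsumura: the left divided difference operators on double theta
polynomials, in multiplied form `ϑ − s_i^t ϑ = α_i · (δ_i ϑ)`. -/
theorem delta_on_theta (k N : ℕ) (x z t : ℕ → R) :
    -- `δ_i(ϑ_r^{(l)}) = 0` if `l ≠ ±i`, i.e. `s_i^t` fixes `ϑ_r^{(l)}`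
    (∀ i : ℕ, ∀ l r : ℤ, l ≠ (i : ℤ) → l ≠ -(i : ℤ) →
      theta k N x z t l r - thetaST i k N x z t l r = 0) ∧
    -- `δ_i(ϑ_r^{(i)}) = ϑ_{r-1}^{(i-1)}` for `i ≥ 0`
    (∀ i : ℕ, ∀ r : ℤ,
      theta k N x z t i r - thetaST i k N x z t i r
        = alphaRoot i t * theta k N x z t ((i : ℤ) - 1) (r - 1)) ∧
    -- `δ_i(ϑ_r^{(-i)}) = ϑ_{r-1}^{(-i-1)}` for `i > 0`
    (∀ i : ℕ, 0 < i → ∀ r : ℤ,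
      theta k N x z t (-(i : ℤ)) r - thetaST i k N x z t (-(i : ℤ)) r
        = alphaRoot i t * theta k N x z t (-(i : ℤ) - 1) (r - 1)) := by
  refine ⟨fun i l r hl hl' => ?_, fun i r => ?_, fun i hi r => ?_⟩
  · rw [sub_eq_zero]
    cases i with
    | zero =>
      rw [thetaST_zero, theta_eq_coeffInt, theta_eq_coeffInt,
        thetaGF_succ_update_zero_neg k N x z t (by simpa using hl)]
    | succ i =>
      rw [thetaST_succ, theta_eq_coeffInt, theta_eq_coeffInt, thetaGF_eq_xzFactor_mul_tFactor,
        thetaGF_eq_xzFactor_mul_tFactor, tFactor_comp_swap_of_ne t hl hl']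
  · cases i with
    | zero =>
      rw [Nat.cast_zero, thetaST_zero, alphaRoot_zero]
      exact coeffInt_sub_eq_of_sub_eq_C_mul_X_mul
        (thetaGF_zero_sub_thetaGF_succ_update_zero_neg k N x z t) r
    | succ i =>
      rw [thetaST_succ, alphaRoot_succ]
      exact theta_sub_theta_eq_of_tFactor_sub k N x z (tFactor_sub_tFactor_comp_swap t i) r
  · obtain ⟨i, rfl⟩ := Nat.exists_eq_add_one_of_ne_zero hi.ne'
    rw [thetaST_succ, alphaRoot_succ]
    exact theta_sub_theta_eq_of_tFactor_sub k N x z (tFactor_neg_sub_tFactor_comp_swap t i) r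

end
end

section
/- Let λ ∈ 𝒫_n^{(k)} be a k-strict partition with characteristic index χ. Then for 1 ≤ j ≤ ℓ(λ), the Schubert position satisfies p_j(λ) = n − χ_j, where p_j(λ) = n + k + j − λ_j − #{i : i < j, λ_i + λ_j > 2k + j − i}. -/
/-!
As in the paper, the `k`-Grassmannian signed permutation
`w_λ^{(k)} = v_1⋯v_k | ζ̄_1⋯ζ̄_s u_1⋯u_{n-k-s}` is encoded as a function `w : ℕ → ℤ` with the
appropriate shape conditions, and `λ` and `χ` are recovered from `w` via `λ_j = ζ_j + k`,
`λ_j = #{p : v_p > u_{j-s}}`, `χ_j = ζ_j − 1`, `χ_j = −u_{j-s}`.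

For `j ≤ s` every `i < j` satisfies `λ_i + λ_j > 2k + j − i`, because `ζ` is positive and
strictly decreasing. For `j > s` let `U = u_{j-s}` and `D = #{i ≤ s : ζ_i > U}`. Since `|w|` is a
bijection onto `{1, …, n}`, counting the entries of `|w|` above `U` block by block gives
`n − U = λ_j + D + (n − k − j)`. As `ζ` strictly decreases, `{i : ζ_i > U} = {1, …, D}`, and with
`U = k + j − λ_j − D` the inequality `λ_i + λ_j > 2k + j − i` becomes `ζ_i > U + D − i`, which
holds exactly for `i ≤ D`.
-/

open Finset

/-- The one-line entries of a `k`-Grassmannian element of `W_n`. -/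
def GrassShape (n k s : ℕ) (w : ℕ → ℤ) : Prop :=
  k + s ≤ n ∧
  (∀ i, i < k → 0 < w i) ∧
  (∀ i, k ≤ i → i < k + s → w i < 0) ∧
  (∀ i, k + s ≤ i → i < n → 0 < w i) ∧
  (∀ i j, i < j → j < k → w i < w j) ∧
  (∀ i j, k ≤ i → i < j → j < k + s → w i < w j) ∧
  (∀ i j, k + s ≤ i → i < j → j < n → w i < w j) ∧
  (∀ i j, i < n → j < n → (w i).natAbs = (w j).natAbs → i = j) ∧
  (∀ i, i < n → 1 ≤ (w i).natAbs ∧ (w i).natAbs ≤ n)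

/-- The part `λ_j` of the `k`-strict partition corresponding to `w`. -/
def lamOf (k s : ℕ) (w : ℕ → ℤ) (j : ℕ) : ℤ :=
  if j ≤ s then -(w (k + j - 1)) + k
  else (((range k).filter (fun p => w (k + j - 1) < w p)).card : ℤ)

/-- The entry `χ_j` of the characteristic index of `λ`. -/
def chiOf (k s : ℕ) (w : ℕ → ℤ) (j : ℕ) : ℤ :=
  if j ≤ s then -(w (k + j - 1)) - 1
  else -(w (k + j - 1))

/-- `p_j(λ) = n + k + j − λ_j − #{i : i < j, λ_i + λ_j > 2k + j − i}`. -/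
noncomputable def pOf (n k s : ℕ) (w : ℕ → ℤ) (j : ℕ) : ℤ :=
  (n : ℤ) + k + j - lamOf k s w j -
    (((Icc 1 (j - 1)).filter
        (fun i => 2 * (k : ℤ) + j - i < lamOf k s w i + lamOf k s w j)).card : ℤ)

theorem Finset.card_filter_Icc_one_eq_card_filter_range (s : ℕ) (Q : ℕ → Prop) [DecidablePred Q] :
    #{i ∈ Icc 1 s | Q i} = #{i ∈ range s | Q (i + 1)} := by
  refine card_nbij' (· - 1) (· + 1) ?_ ?_ ?_ ?_ <;> intro i <;> (simp +contextual; try omega)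

theorem Finset.card_filter_lt_of_injOn {α : Type*} (t : Finset α) {f : α → ℕ}
    (hf : Set.InjOn f t) (hmaps : ∀ a ∈ t, f a ∈ Icc 1 #t) (U : ℕ) :
    #{a ∈ t | U < f a} = #t - U := by
  have himage : t.image f = Icc 1 #t :=
    eq_of_subset_of_card_le (image_subset_iff.2 hmaps)
      (by rw [Nat.card_Icc, card_image_of_injOn hf]; omega)
  have hIoc : {m ∈ Icc 1 #t | U < m} = Ioc U #t := by
    ext m; simp only [mem_filter, mem_Icc, mem_Ioc]; omega
  rw [← card_image_of_injOn (hf.mono (coe_subset.2 (filter_subset _ _))), ← filter_image,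
    himage, hIoc, Nat.card_Ioc]

theorem Finset.filter_Icc_eq_Ico_card {P : ℕ → Prop} [DecidablePred P] {a b : ℕ}
    (hP : ∀ p q, a ≤ p → p ≤ q → q ≤ b → P q → P p) :
    {x ∈ Icc a b | P x} = Ico a (a + #{x ∈ Icc a b | P x}) := by
  refine eq_of_subset_of_card_le (fun p hp => ?_) (by rw [Nat.card_Ico]; omega)
  obtain ⟨hpab, hPp⟩ := mem_filter.1 hp
  rw [mem_Icc] at hpab
  have hsub : Icc a p ⊆ {x ∈ Icc a b | P x} := fun x hx => by
    rw [mem_Icc] at hx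
    exact mem_filter.2 ⟨mem_Icc.2 ⟨hx.1, hx.2.trans hpab.2⟩, hP x p hx.1 hx.2 hpab.2 hPp⟩
  have := card_le_card hsub
  rw [Nat.card_Icc] at this
  exact mem_Ico.2 ⟨hpab.1, by omega⟩

theorem StrictMonoOn.add_sub_le {f : ℕ → ℤ} {a b : ℕ} (hf : StrictMonoOn f (Set.Ico a b))
    {p q : ℕ} (hap : a ≤ p) (hpq : p ≤ q) (hqb : q < b) : f p + (q - p : ℤ) ≤ f q := by
  induction q, hpq using Nat.le_induction with
  | base => simp
  | succ q hpq ih =>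
    have hstep := hf ⟨hap.trans hpq, by omega⟩ ⟨by omega, hqb⟩ q.lt_succ_self
    have := ih (by omega)
    push_cast
    omega

theorem lamOf_le_of_lt (k s : ℕ) (w : ℕ → ℤ) {j : ℕ} (hsj : s < j) : lamOf k s w j ≤ k := by
  rw [lamOf, if_neg (by omega)]
  exact_mod_cast (card_filter_le _ _).trans (card_range k).le

namespace GrassShape

variable {n k s : ℕ} {w : ℕ → ℤ}

theorem strictMonoOn_neg (hw : GrassShape n k s w) : StrictMonoOn w (Set.Ico k (k + s)) :=
  fun _ hp _ hq hpq => hw.2.2.2.2.2.1 _ _ hp.1 hpq hq.2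

theorem strictMonoOn_pos (hw : GrassShape n k s w) : StrictMonoOn w (Set.Ico (k + s) n) :=
  fun _ hp _ hq hpq => hw.2.2.2.2.2.2.1 _ _ hp.1 hpq hq.2

theorem natAbs_injOn (hw : GrassShape n k s w) :
    Set.InjOn (fun p => (w p).natAbs) (range n : Finset ℕ) :=
  fun p hp q hq hpq => hw.2.2.2.2.2.2.2.1 p q (mem_range.1 hp) (mem_range.1 hq) hpq

theorem natAbs_mem_Icc (hw : GrassShape n k s w) :
    ∀ p ∈ range n, (w p).natAbs ∈ Icc 1 #(range n) := fun p hp => by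
  rw [card_range, mem_Icc]
  exact hw.2.2.2.2.2.2.2.2 p (mem_range.1 hp)

theorem neg_ne (hw : GrassShape n k s w) {p q : ℕ} (hp : p < n) (hq : q < n) (hpq : p ≠ q) :
    -w p ≠ w q := fun h =>
  hpq (hw.natAbs_injOn (mem_range.2 hp) (mem_range.2 hq) (by simp [← h]))

theorem neg_add_sub_le (hw : GrassShape n k s w) {i i' : ℕ} (hi : 1 ≤ i) (hii' : i ≤ i')
    (hi' : i' ≤ s) : -w (k + i' - 1) + (i' - i) ≤ -w (k + i - 1) := by
  have := hw.strictMonoOn_neg.add_sub_le (p := k + i - 1) (q := k + i' - 1)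
    (by omega) (by omega) (by omega)
  omega

theorem pOf_eq_of_le (hw : GrassShape n k s w) {j : ℕ} (hj : 1 ≤ j) (hjs : j ≤ s) :
    pOf n k s w j = n - chiOf k s w j := by
  have hneg : w (k + j - 1) < 0 := hw.2.2.1 _ (by omega) (by omega)
  have hall : {i ∈ Icc 1 (j - 1) | 2 * (k : ℤ) + j - i < lamOf k s w i + lamOf k s w j} =
      Icc 1 (j - 1) := by
    refine filter_true_of_mem fun i hi => ?_
    rw [mem_Icc] at hi
    have := hw.neg_add_sub_le hi.1 (by omega : i ≤ j) hjs
    rw [lamOf, if_pos (by omega), lamOf, if_pos hjs]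
    omega
  rw [pOf, hall, Nat.card_Icc, chiOf, if_pos hjs, lamOf, if_pos hjs]
  omega

theorem card_filter_lt_natAbs_add (hw : GrassShape n k s w) {j : ℕ} (hsj : s < j)
    (hj : j ≤ n - k) :
    #{i ∈ range (n - (k + s)) | (w (k + j - 1)).natAbs < (w (k + s + i)).natAbs} =
      n - (k + j) := by
  rw [show n - (k + j) = n - (k + s) - (j - s) by omega, ← Nat.card_Ico (j - s)]
  refine congrArg card (Finset.ext fun i => ?_)
  simp only [mem_filter, mem_range, mem_Ico]
  have hwj := hw.2.2.2.1 (k + j - 1) (by omega) (by omega)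
  have hwi := hw.2.2.2.1 (k + s + i)
  refine ⟨fun ⟨hi, hlt⟩ => ⟨?_, hi⟩, fun ⟨hji, hi⟩ => ⟨hi, ?_⟩⟩
  · have := hw.strictMonoOn_pos.lt_iff_lt (a := k + j - 1) (b := k + s + i)
      ⟨by omega, by omega⟩ ⟨by omega, by omega⟩
    have := hwi (by omega) (by omega)
    omega
  · have := hw.strictMonoOn_pos (a := k + j - 1) (b := k + s + i)
      ⟨by omega, by omega⟩ ⟨by omega, by omega⟩ (by omega)
    have := hwi (by omega) (by omega)
    omega

theorem add_lamOf_add_card_eq (hw : GrassShape n k s w) {j : ℕ} (hsj : s < j)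
    (hj : j ≤ n - k) :
    w (k + j - 1) + lamOf k s w j + #{i ∈ Icc 1 s | w (k + j - 1) < -w (k + i - 1)} = k + j := by
  obtain ⟨hks, hpos₁, hneg, hpos₂, -⟩ := id hw
  have hwj : 0 < w (k + j - 1) := hpos₂ _ (by omega) (by omega)
  set U := (w (k + j - 1)).natAbs
  have hU : (U : ℤ) = w (k + j - 1) := Int.natAbs_of_nonneg hwj.le
  have hUn : U ≤ n := by
    simpa using (mem_Icc.1 (hw.natAbs_mem_Icc _ (mem_range.2 (by omega : k + j - 1 < n)))).2
  set P : ℕ → Prop := fun p => U < (w p).natAbs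
  have htotal : Nat.count P n = n - U := by
    rw [Nat.count_eq_card_filter_range, card_filter_lt_of_injOn _ hw.natAbs_injOn hw.natAbs_mem_Icc,
      card_range]
  have hsplit : Nat.count P n = Nat.count P k + Nat.count (fun i => P (k + i)) s +
      Nat.count (fun i => P (k + s + i)) (n - (k + s)) := by
    conv_lhs => rw [← Nat.add_sub_of_le hks, Nat.count_add, Nat.count_add]
  have hv : (Nat.count P k : ℤ) = lamOf k s w j := by
    rw [lamOf, if_neg (by omega), Nat.count_eq_card_filter_range]
    congr 2
    refine filter_congr fun p hp => ?_
    have := hpos₁ p (mem_range.1 hp)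
    omega
  have hζ : Nat.count (fun i => P (k + i)) s = #{i ∈ Icc 1 s | w (k + j - 1) < -w (k + i - 1)} := by
    rw [card_filter_Icc_one_eq_card_filter_range, Nat.count_eq_card_filter_range]
    refine congrArg card (filter_congr fun i hi => ?_)
    have := hneg (k + i) (by omega) (by simpa using mem_range.1 hi)
    rw [show k + (i + 1) - 1 = k + i by omega]
    omega
  have hu : Nat.count (fun i => P (k + s + i)) (n - (k + s)) = n - (k + j) := by
    rw [Nat.count_eq_card_filter_range, hw.card_filter_lt_natAbs_add hsj hj]
  omega

theorem filter_pOf_eq (hw : GrassShape n k s w) {j : ℕ} (hsj : s < j) (hj : j ≤ n - k) :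
    {i ∈ Icc 1 (j - 1) | 2 * (k : ℤ) + j - i < lamOf k s w i + lamOf k s w j} =
      {i ∈ Icc 1 s | w (k + j - 1) < -w (k + i - 1)} := by
  set D := #{i ∈ Icc 1 s | w (k + j - 1) < -w (k + i - 1)}
  have hcount := hw.add_lamOf_add_card_eq hsj hj
  have hDs : D ≤ s := by simpa using card_filter_le (Icc 1 s) _
  have hinit : {i ∈ Icc 1 s | w (k + j - 1) < -w (k + i - 1)} = Ico 1 (1 + D) :=
    filter_Icc_eq_Ico_card fun p q hp hpq hq hlt => by have := hw.neg_add_sub_le hp hpq hq; omega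
  have hmem : ∀ i, 1 ≤ i → i ≤ s → (w (k + j - 1) < -w (k + i - 1) ↔ i ≤ D) := fun i hi his => by
    have := congrArg (i ∈ ·) hinit
    simp only [mem_filter, mem_Icc, mem_Ico, eq_iff_iff] at this
    omega
  ext i
  simp only [mem_filter, mem_Icc]
  by_cases his : i ≤ s
  · rw [show lamOf k s w i = -w (k + i - 1) + k from if_pos his]
    constructor
    · rintro ⟨hi, hcond⟩
      refine ⟨⟨hi.1, his⟩, ?_⟩
      by_contra hle
      have hDi : D < i := by have := hmem i hi.1 his; omega
      have hnext := (hmem (D + 1) (by omega) (by omega)).not.2 (by omega)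
      have hne := hw.neg_ne (p := k + (D + 1) - 1) (q := k + j - 1) (by omega) (by omega) (by omega)
      have := hw.neg_add_sub_le (i := D + 1) (by omega) hDi his
      omega
    · rintro ⟨hi, hlt⟩
      have hiD := (hmem i hi.1 his).1 hlt
      have hD := (hmem D (by omega) (by omega)).2 le_rfl
      have := hw.neg_add_sub_le hi.1 hiD (by omega)
      refine ⟨⟨hi.1, by omega⟩, by omega⟩
  · have := lamOf_le_of_lt k s w (not_le.1 his)
    have := lamOf_le_of_lt k s w hsj
    simp only [his, and_false, false_and, iff_false]
    omega

theorem pOf_eq_of_lt (hw : GrassShape n k s w) {j : ℕ} (hsj : s < j) (hj : j ≤ n - k) :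
    pOf n k s w j = n - chiOf k s w j := by
  rw [pOf, hw.filter_pOf_eq hsj hj, chiOf, if_neg (by omega)]
  have := hw.add_lamOf_add_card_eq hsj hj
  omega

end GrassShape

theorem schubert_position_eq_general (n k s : ℕ) (w : ℕ → ℤ) (hw : GrassShape n k s w)
    (j : ℕ) (hj1 : 1 ≤ j) (hj2 : j ≤ n - k) :
    pOf n k s w j = (n : ℤ) - chiOf k s w j := by
  rcases le_or_gt j s with hjs | hsj
  · exact hw.pOf_eq_of_le hj1 hjs
  · exact hw.pOf_eq_of_lt hsj hj2

/-- Equation (3.5): `p_j(λ) = n − χ_j` for `1 ≤ j ≤ ℓ(λ)`. -/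
theorem schubert_position_eq (n k s : ℕ) (w : ℕ → ℤ) (hw : GrassShape n k s w)
    (j : ℕ) (hj1 : 1 ≤ j) (hj2 : j ≤ n - k) (hlam : lamOf k s w j ≠ 0) :
    pOf n k s w j = (n : ℤ) - chiOf k s w j :=
  schubert_position_eq_general n k s w hw j hj1 hj2
end
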